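/- Let k ⊆ l be number fields, let ω₁, …, ω_e be a k-basis of l contained in O_l, let 𝔐 ⊆ O_l be the full O_k-module they generate, and let E_{l/k}(𝔐) = {α ∈ O_𝔐^× : Norm_{l/k}(α) ∈ Tor(O_k^×)} be its group of relative units. For each nonzero β ∈ O_k, the solution set {μ ∈ 𝔐 : Norm_{l/k}(μ) ∈ Tor(O_k^×)·β} is a disjoint union of finitely many equivalence classes under the relation μ₁ ~ μ₂ iff γμ₁ = μ₂ for some γ ∈ E_{l/k}(𝔐); that is, the quotient of this solution set by the multiplication action of E_{l/k}(𝔐) is finite. -/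

import Mathlib

open NumberField Module

/-- The normalized logarithmic absolute value `log |x|_w` at an infinite place `w`
of a number field `F`, where `|·|_w = ‖·‖_w^{d_w/d}`. -/
noncomputable def infLogAbs (F : Type*) [Field F] [NumberField F]
    (w : InfinitePlace F) (x : F) : ℝ :=
  (w.mult : ℝ) / (finrank ℚ F : ℝ) * Real.log (w x)

/-- The normalized logarithmic absolute value `log |x|_v` at a finite place `v`
of a number field `F`. -/
noncomputable def finLogAbs (F : Type*) [Field F] [NumberField F]
    (v : IsDedekindDomain.HeightOneSpectrum (𝓞 F)) (x : F) : ℝ :=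
  if h : (v.valuation (K := F)) x = 0 then 0
  else ((Multiplicative.toAdd (WithZero.unzero h) : ℤ) : ℝ) / (finrank ℚ F : ℝ) *
    Real.log (Ideal.absNorm v.asIdeal)

/-- The absolute logarithmic Weil height `h(x) = ∑_w log⁺ |x|_w`, the sum running over
all (infinite and finite) places of the number field `F`. -/
noncomputable def weilHeight (F : Type*) [Field F] [NumberField F] (x : F) : ℝ :=
  (∑ w : InfinitePlace F, max 0 (infLogAbs F w x)) +
    ∑ᶠ v : IsDedekindDomain.HeightOneSpectrum (𝓞 F), max 0 (finLogAbs F v x)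

/-- The full `O_k`-module `𝔐` generated by elements `ω i` of `l`. -/
def fullModule (K : Type*) [Field K] [NumberField K] {L : Type*} [Field L]
    [Algebra K L] {e : ℕ} (ω : Fin e → L) : Set L :=
  {x | ∃ ν : Fin e → 𝓞 K, x = ∑ i, algebraMap K L (ν i : K) * ω i}

/-- The coefficient ring `O_𝔐 = {α ∈ l : α𝔐 ⊆ 𝔐}` of a full module `𝔐 ⊆ l`. -/
def coeffRing {L : Type*} [Field L] (M : Set L) : Set L :=
  {α | ∀ x ∈ M, α * x ∈ M}

/-- The unit group `O_𝔐^× = O_𝔐 ∩ O_l^×` of the coefficient ring. -/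
def coeffRingUnits {L : Type*} [Field L] [NumberField L] (M : Set L) : Set L :=
  {α | α ∈ coeffRing M ∧ ∃ u : (𝓞 L)ˣ, ((u : 𝓞 L) : L) = α}

/-- The group `E_{l/k}(𝔐) = {α ∈ O_𝔐^× : Norm_{l/k}(α) ∈ Tor(O_k^×)}` of relative units. -/
def relUnits (K : Type*) [Field K] [NumberField K] (L : Type*) [Field L] [NumberField L]
    [Algebra K L] (M : Set L) : Set L :=
  {α | α ∈ coeffRingUnits M ∧ ∃ n : ℕ, 0 < n ∧ (Algebra.norm K α) ^ n = 1}

/-- A family of elements of `Lˣ` is multiplicatively independent if no nontrivial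
integer-power product of them equals `1`. -/
def MulIndep {L : Type*} [Field L] {r : ℕ} (ε : Fin r → L) : Prop :=
  ∀ m : Fin r → ℤ, (∏ j, ε j ^ m j) = 1 → m = 0

open scoped Classical in
/-- The set of infinite places of `L` lying above an infinite place `v` of `K`. -/
noncomputable def placesAbove (K : Type*) [Field K] (L : Type*) [Field L] [NumberField L]
    [Algebra K L] (v : InfinitePlace K) : Finset (InfinitePlace L) :=
  Finset.univ.filter (fun w => w.comap (algebraMap K L) = v)

/-!
A solution `μ` lies in `O_l` and `|N_{l/ℚ}(μ)| = n := |N_{k/ℚ}(β)|`, so `μ ∣ n` in `O_l`.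
Choose `0 ≠ d ∈ ℤ` with `d O_l ⊆ 𝔐`. If two solutions `μ, ν` are congruent modulo `d n`, then
each divides the other (both divide `n`), and `ν = u μ` for a unit `u ≡ 1 mod d`. Such a unit
stabilises `𝔐`, since `(u - 1) 𝔐 ⊆ d O_l ⊆ 𝔐`, and `N_{l/k}(u)` is a quotient of roots of unity,
so `u ∈ E_{l/k}(𝔐)`. Hence the classes are indexed by a subset of the finite ring `O_l / d n O_l`.
-/

theorem exists_finset_forall_exists_of_finite {α β : Type*} [Finite β] {S : Set α}
    (F : S → β) {r : α → α → Prop} (hr : ∀ x y : S, F x = F y → r x y) :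
    ∃ T : Finset α, ↑T ⊆ S ∧ ∀ x ∈ S, ∃ y ∈ T, r x y := by
  classical
  rcases isEmpty_or_nonempty S with hS | hS
  · exact ⟨∅, by simp, fun x hx => (hS.false ⟨x, hx⟩).elim⟩
  have := Fintype.ofFinite β
  refine ⟨Finset.univ.image fun c => ((Function.invFun F c : S) : α), ?_, fun x hx => ?_⟩
  · simp only [Finset.coe_image, Finset.coe_univ, Set.image_univ]
    rintro _ ⟨c, rfl⟩
    exact (Function.invFun F c).2
  · exact ⟨_, Finset.mem_image_of_mem _ (Finset.mem_univ (F ⟨x, hx⟩)),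
      hr ⟨x, hx⟩ _ (Function.invFun_eq ⟨_, rfl⟩).symm⟩

theorem exists_unit_mul_eq_of_mul_dvd_sub {R : Type*} [CommRing R] [IsDomain R] {m n μ ν : R}
    (hn : n ≠ 0) (hμ : μ ∣ n) (hν : ν ∣ n) (h : m * n ∣ ν - μ) :
    ∃ u : Rˣ, m ∣ (u : R) - 1 ∧ (u : R) * μ = ν := by
  obtain ⟨s, hs⟩ := hμ
  obtain ⟨s', hs'⟩ := hν
  obtain ⟨t, ht⟩ := h
  have hμ0 : μ ≠ 0 := by rintro rfl; exact hn (by simpa using hs)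
  have hνμ : ν = μ * (1 + m * s * t) := by linear_combination ht + m * t * hs
  have hμν : μ = ν * (1 - m * s' * t) := by linear_combination -ht - m * t * hs'
  have hinv : (1 + m * s * t) * (1 - m * s' * t) = 1 :=
    mul_left_cancel₀ hμ0 (by rw [← mul_assoc, ← hνμ, ← hμν, mul_one])
  exact ⟨Units.mkOfMulEqOne _ _ hinv, ⟨s * t, by simp; ring⟩, by simp [hνμ, mul_comm]⟩

theorem isOfFinOrder_of_mul_eq {M : Type*} [CommMonoid M] {a x y : M} (hx : IsOfFinOrder x)
    (hy : IsOfFinOrder y) (h : a * x = y) : IsOfFinOrder a := by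
  obtain ⟨k, hk, hxk⟩ := hx.exists_pow_eq_one
  obtain ⟨k', hk', hyk'⟩ := hy.exists_pow_eq_one
  refine isOfFinOrder_iff_pow_eq_one.mpr ⟨k * k', Nat.mul_pos hk hk', ?_⟩
  calc a ^ (k * k') = (a * x) ^ (k * k') := by rw [mul_pow, pow_mul x, hxk, one_pow, mul_one]
    _ = 1 := by rw [h, mul_comm k, pow_mul, hyk', one_pow]

theorem isOfFinOrder_norm_of_mul_eq {K L : Type*} [Field K] [Field L] [Algebra K L]
    {γ μ ν : L} {ζ ζ' β : K} (hβ : β ≠ 0) (hζ : IsOfFinOrder ζ) (hζ' : IsOfFinOrder ζ')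
    (hμ : Algebra.norm K μ = ζ * β) (hν : Algebra.norm K ν = ζ' * β) (h : γ * μ = ν) :
    IsOfFinOrder (Algebra.norm K γ) := by
  refine isOfFinOrder_of_mul_eq hζ hζ' (mul_right_cancel₀ hβ ?_)
  rw [mul_assoc, ← hμ, ← map_mul, h, hν]

theorem mem_coeffRing_of_dvd_sub_one {L R : Type*} [Field L] [Semiring R] [Module R L]
    {N : Submodule R L} (hN : ∀ x ∈ N, IsIntegral ℤ x) {m u : 𝓞 L}
    (hm : ∀ y : 𝓞 L, ((m * y : 𝓞 L) : L) ∈ N) (hu : m ∣ u - 1) :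
    (u : L) ∈ coeffRing (N : Set L) := by
  intro x hx
  obtain ⟨t, ht⟩ := hu
  have : (u : L) * x = x + ((m * (t * ⟨x, hN x hx⟩) : 𝓞 L) : L) := by
    have ht' : (u : L) - 1 = m * t := congrArg ((↑) : 𝓞 L → L) ht
    rw [show ((m * (t * ⟨x, hN x hx⟩) : 𝓞 L) : L) = m * (t * x) from rfl]
    linear_combination x * ht'
  rw [this]
  exact N.add_mem hx (hm _)

section

variable {K : Type*} [Field K] {L : Type*} [Field L] [Algebra K L]

theorem isIntegral_of_mem_span {ι : Type*} {ω : ι → L} (hω : ∀ i, IsIntegral ℤ (ω i)) {x : L}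
    (hx : x ∈ Submodule.span (𝓞 K) (Set.range ω)) : IsIntegral ℤ x := by
  induction hx using Submodule.span_induction with
  | mem x hx => obtain ⟨i, rfl⟩ := hx; exact hω i
  | zero => exact isIntegral_zero
  | add x y _ _ hx hy => exact hx.add hy
  | smul c x _ hx => exact Algebra.smul_def c x ▸ (RingOfIntegers.isIntegral c).algebraMap.mul hx

variable [NumberField K]

theorem fullModule_eq_span {e : ℕ} (ω : Fin e → L) :
    fullModule K ω = Submodule.span (𝓞 K) (Set.range ω) := by
  ext x
  rw [SetLike.mem_coe, Submodule.mem_span_range_iff_exists_fun]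
  simp only [Algebra.smul_def]
  exact exists_congr fun _ => eq_comm

variable [NumberField L]

theorem exists_intCast_mul_mem_span {ι : Type*} [Fintype ι] (b : Basis ι K L) :
    ∃ d : ℤ, d ≠ 0 ∧ ∀ y : 𝓞 L, (d : L) * y ∈ Submodule.span (𝓞 K) (Set.range b) := by
  classical
  let B := RingOfIntegers.basis L
  obtain ⟨d, hd0, hd⟩ := exists_integral_multiples ℤ ℚ
    (Finset.univ.image fun p : _ × ι => b.repr (B p.1 : L) p.2)
  have hB : ∀ j, (d : L) * B j ∈ Submodule.span (𝓞 K) (Set.range b) := by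
    intro j
    rw [← b.sum_repr (B j : L), Finset.mul_sum]
    refine Submodule.sum_mem _ fun i _ => ?_
    have hint : IsIntegral ℤ ((d : K) * b.repr (B j) i) := by
      simpa [zsmul_eq_mul] using hd _ (Finset.mem_image_of_mem _ (Finset.mem_univ (j, i)))
    have : (d : L) * (b.repr (B j) i • b i) = (⟨_, hint⟩ : 𝓞 K) • b i := by
      change _ = ((d : K) * b.repr (B j) i) • b i
      simp [Algebra.smul_def, mul_assoc]
    rw [this]
    exact Submodule.smul_mem _ _ (Submodule.subset_span (Set.mem_range_self i))
  refine ⟨d, hd0, fun y => ?_⟩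
  rw [← B.sum_repr y]
  push_cast
  rw [Finset.mul_sum]
  refine Submodule.sum_mem _ fun j _ => ?_
  rw [mul_smul_comm]
  exact zsmul_mem (hB j) _

theorem natAbs_norm_eq_of_norm_eq_mul {μ : 𝓞 L} {β : 𝓞 K} {ζ : K} (hζ : IsOfFinOrder ζ)
    (h : Algebra.norm K (μ : L) = ζ * β) :
    (Algebra.norm ℤ μ).natAbs = (Algebra.norm ℤ β).natAbs := by
  have hζ1 : |Algebra.norm ℚ ζ| = 1 :=
    (absHom.toMonoidHom.isOfFinOrder ((Algebra.norm ℚ).isOfFinOrder hζ)).eq_one (abs_nonneg _)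
  have : |(Algebra.norm ℤ μ : ℚ)| = |(Algebra.norm ℤ β : ℚ)| := by
    rw [Algebra.coe_norm_int, Algebra.coe_norm_int, ← Algebra.norm_norm (S := K), h, map_mul,
      abs_mul, hζ1, one_mul]
  have : |Algebra.norm ℤ μ| = |Algebra.norm ℤ β| := by exact_mod_cast this
  rwa [Int.abs_eq_natAbs, Int.abs_eq_natAbs, Int.natCast_inj] at this

theorem dvd_natAbs_norm (μ : 𝓞 L) : μ ∣ ((Algebra.norm ℤ μ).natAbs : 𝓞 L) := by
  rw [← Ideal.mem_span_singleton, ← Ideal.absNorm_span_singleton]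
  exact Ideal.absNorm_mem _

end

theorem solutions_finitely_many_classes_general
    (K L : Type*) [Field K] [NumberField K] [Field L] [NumberField L] [Algebra K L]
    (e : ℕ) (b : Basis (Fin e) K L)
    (hbInt : ∀ i, IsIntegral ℤ (b i))
    (M : Set L) (hM : M = fullModule K (fun i => b i))
    (β : K) (hβInt : IsIntegral ℤ β) (hβ : β ≠ 0)
    (S : Set L)
    (hS : S = {x ∈ M | ∃ ζ : K, (∃ n : ℕ, 0 < n ∧ ζ ^ n = 1) ∧
        Algebra.norm K x = ζ * β}) :
    ∃ T : Finset L, ↑T ⊆ S ∧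
      ∀ μ ∈ S, ∃ μ' ∈ T, ∃ γ ∈ relUnits K L M, γ * μ = μ' := by
  rw [fullModule_eq_span] at hM
  subst hM
  have hsol : ∀ μ : S, IsIntegral ℤ (μ : L) ∧
      ∃ ζ : K, IsOfFinOrder ζ ∧ Algebra.norm K (μ : L) = ζ * β := by
    rintro ⟨μ, hμ⟩
    rw [hS] at hμ
    obtain ⟨hμM, ζ, hζ, hN⟩ := hμ
    exact ⟨isIntegral_of_mem_span hbInt hμM, ζ, isOfFinOrder_iff_pow_eq_one.mpr hζ, hN⟩
  choose hint ζ hζ hNζ using hsol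
  let toO (μ : S) : 𝓞 L := ⟨μ, hint μ⟩
  let β' : 𝓞 K := ⟨β, hβInt⟩
  have hdvd (μ : S) : toO μ ∣ (Algebra.norm ℤ β').natAbs :=
    natAbs_norm_eq_of_norm_eq_mul (μ := toO μ) (β := β') (hζ μ) (hNζ μ) ▸ dvd_natAbs_norm (toO μ)
  obtain ⟨d, hd0, hd⟩ := exists_intCast_mul_mem_span b
  have hn0 : ((Algebra.norm ℤ β').natAbs : 𝓞 L) ≠ 0 := Nat.cast_ne_zero.mpr <|
    Int.natAbs_ne_zero.mpr <| Algebra.norm_ne_zero_iff.mpr <| RingOfIntegers.coe_ne_zero_iff.mp hβ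
  let I := Ideal.span {(d : 𝓞 L) * (Algebra.norm ℤ β').natAbs}
  have : Finite (𝓞 L ⧸ I) := Ideal.finiteQuotientOfFreeOfNeBot _ <|
    Ideal.span_singleton_eq_bot.not.mpr (mul_ne_zero (Int.cast_ne_zero.mpr hd0) hn0)
  refine exists_finset_forall_exists_of_finite (fun μ => Ideal.Quotient.mk I (toO μ))
    fun μ ν hμν => ?_
  obtain ⟨u, hu, huμ⟩ := exists_unit_mul_eq_of_mul_dvd_sub hn0 (hdvd μ) (hdvd ν)
    (Ideal.mem_span_singleton.mp (Ideal.Quotient.eq.mp hμν.symm))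
  have hγ : (u : L) * μ = ν := congrArg ((↑) : 𝓞 L → L) huμ
  refine ⟨u, ⟨⟨?_, u, rfl⟩, isOfFinOrder_iff_pow_eq_one.mp <|
    isOfFinOrder_norm_of_mul_eq hβ (hζ μ) (hζ ν) (hNζ μ) (hNζ ν) hγ⟩, hγ⟩
  exact mem_coeffRing_of_dvd_sub_one (fun x => isIntegral_of_mem_span hbInt)
    (fun y => by simpa using hd y) hu

/-- **Finiteness of the number of equivalence classes.** For each nonzero `β ∈ O_k`, the
solution set `{μ ∈ 𝔐 : Norm_{l/k}(μ) ∈ Tor(O_k^×)·β}` is a disjoint union of finitely many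
equivalence classes under `μ₁ ~ μ₂ ↔ ∃ γ ∈ E_{l/k}(𝔐), γμ₁ = μ₂`: there is a finite set of
solutions `T` such that every solution is equivalent to a member of `T`. -/
theorem solutions_finitely_many_classes
    (K L : Type*) [Field K] [NumberField K] [Field L] [NumberField L] [Algebra K L]
    (e : ℕ) (he : e = finrank K L) (b : Basis (Fin e) K L)
    (hbInt : ∀ i, IsIntegral ℤ (b i))
    (M : Set L) (hM : M = fullModule K (fun i => b i))
    (β : K) (hβInt : IsIntegral ℤ β) (hβ : β ≠ 0)
    (S : Set L)
    (hS : S = {x ∈ M | ∃ ζ : K, (∃ n : ℕ, 0 < n ∧ ζ ^ n = 1) ∧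
        Algebra.norm K x = ζ * β}) :
    ∃ T : Finset L, ↑T ⊆ S ∧
      ∀ μ ∈ S, ∃ μ' ∈ T, ∃ γ ∈ relUnits K L M, γ * μ = μ' :=
  solutions_finitely_many_classes_general K L e b hbInt M hM β hβInt hβ S hS
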